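/- For every k ≥ 1, every signed graph (G,σ) with ψ(G,σ) = k contains an induced signed subgraph (H,σ) with ψ(H,σ) = k and |V(H)| ≤ (k+1)². (In particular, there is a polynomial function f(k) such that every signed graph with achromatic number k has an induced signed subgraph with achromatic number k and size at most f(k).) -/

import Mathlib

open SimpleGraph

/-- A signature on a graph: a symmetric assignment of signs (`1` or `-1`) to pairs of
vertices (only the values on edges are relevant). -/
def IsSignature {V : Type*} (σ : V → V → ℤ) : Prop :=
  (∀ u v, σ u v = σ v u) ∧ (∀ u v, σ u v = 1 ∨ σ u v = -1)

/-- `σ'` is obtained from `σ` by switching a set of vertices: every vertex gets a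
switching value `±1`, and the sign of an edge is multiplied by the values at its ends. -/
def SwitchEquiv {V : Type*} (σ σ' : V → V → ℤ) : Prop :=
  ∃ s : V → ℤ, (∀ v, s v = 1 ∨ s v = -1) ∧ ∀ u v, σ' u v = s u * s v * σ u v

/-- The colour set `M_k`, as a set of integers: `{±1, …, ±n}` if `k = 2n`, and
`{-n, …, -1, 0, 1, …, n}` if `k = 2n+1` (colour `±0` is represented by `0`). -/
def colourSet (k : ℕ) : Set ℤ :=
  if Even k then {i | i ≠ 0 ∧ i.natAbs ≤ k / 2} else {i | i.natAbs ≤ k / 2}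

/-- A proper `k`-colouring of the signed graph `(G, σ)`: colours come from `M_k` and,
for each edge `uv`, `φ u ≠ σ(uv) · φ v`. -/
def IsProperColouring {V : Type*} (G : SimpleGraph V) (σ : V → V → ℤ) (k : ℕ)
    (φ : V → ℤ) : Prop :=
  (∀ v, φ v ∈ colourSet k) ∧ ∀ u v, G.Adj u v → φ u ≠ σ u v * φ v

/-- The sign of an integer for the purpose of switching: `-1` for negative colours,
`1` otherwise. -/
def isgn (x : ℤ) : ℤ := if x < 0 then -1 else 1

/-- The sign of the edge `uv` after switching every vertex whose colour is negative. -/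
def redSign {V : Type*} (σ : V → V → ℤ) (φ : V → ℤ) (u v : V) : ℤ :=
  isgn (φ u) * isgn (φ v) * σ u v

/-- After switching all negatively-coloured vertices and taking absolute values of
colours, there is an edge of `(G, σ)` whose ends get values `i` and `j` and whose
resulting sign is `s`. -/
def HasEdgeType {V : Type*} (G : SimpleGraph V) (σ : V → V → ℤ) (φ : V → ℤ)
    (i j : ℕ) (s : ℤ) : Prop :=
  ∃ u v, G.Adj u v ∧ (φ u).natAbs = i ∧ (φ v).natAbs = j ∧ redSign σ φ u v = s

/-- A complete `k`-colouring of the signed graph `(G, σ)`. -/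
def IsCompleteColouring {V : Type*} (G : SimpleGraph V) (σ : V → V → ℤ) (k : ℕ)
    (φ : V → ℤ) : Prop :=
  IsProperColouring G σ k φ ∧
  (∀ i j : ℕ, (i : ℤ) ∈ colourSet k → (j : ℤ) ∈ colourSet k → i ≠ j →
    HasEdgeType G σ φ i j 1 ∧ HasEdgeType G σ φ i j (-1)) ∧
  (∀ i : ℕ, 1 ≤ i → (i : ℤ) ∈ colourSet k → HasEdgeType G σ φ i i (-1))

/-- Some signed graph equivalent to `(G, σ)` admits a complete `k`-colouring. -/
def AdmitsComplete {V : Type*} (G : SimpleGraph V) (σ : V → V → ℤ) (k : ℕ) : Prop :=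
  ∃ σ', IsSignature σ' ∧ SwitchEquiv σ σ' ∧ ∃ φ, IsCompleteColouring G σ' k φ

/-- The achromatic number of the signed graph `(G, σ)`: the largest `k` such that some
signed graph equivalent to `(G, σ)` admits a complete `k`-colouring. -/
noncomputable def psi {V : Type*} (G : SimpleGraph V) (σ : V → V → ℤ) : ℕ :=
  sSup {k | AdmitsComplete G σ k}

/-- The chromatic number of the signed graph `(G, σ)`: the smallest `k` such that
`(G, σ)` admits a proper `k`-colouring. -/
noncomputable def chi {V : Type*} (G : SimpleGraph V) (σ : V → V → ℤ) : ℕ :=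
  sInf {k | ∃ φ, IsProperColouring G σ k φ}

/-!
Fix a complete `k`-colouring of a signature switching-equivalent to `σ`. For each of the at most
`2 m²` required edge types, where `m ≤ (k + 1) / 2` is the number of absolute colour values, keep
the two ends of one edge realising it. The restriction of the colouring to these at most
`(k + 1)²` vertices is still complete, so the induced subgraph `H` has `ψ(H) ≥ k`.

Conversely, a complete colouring of `H` extends vertex by vertex to a complete colouring of `G`
with at least as many colours. A new vertex takes a colour that none of its neighbours forbids,
if there is one. Otherwise it sees every colour of `M_k` along its edges; it then becomes the
new colour `0` when `k` is even, and when `k` is odd it opens the new absolute value `k / 2 + 1`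
together with the old colour class `0`. Hence `ψ(H) ≤ ψ(G) = k`.
-/

section

variable {V : Type*} {G : SimpleGraph V} {σ : V → V → ℤ} {φ φ' : V → ℤ} {S S' : Set V}
  {k : ℕ} {u v : V}

theorem mem_colourSet_iff {x : ℤ} :
    x ∈ colourSet k ↔ 1 - k % 2 ≤ x.natAbs ∧ x.natAbs ≤ k / 2 := by
  unfold colourSet
  split_ifs with hk <;> simp only [Set.mem_ofPred_eq] <;>
    [rw [Nat.even_iff] at hk; rw [Nat.not_even_iff] at hk] <;> omega

theorem natCast_mem_colourSet_iff {i : ℕ} :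
    (i : ℤ) ∈ colourSet k ↔ 1 - k % 2 ≤ i ∧ i ≤ k / 2 := by
  simp [mem_colourSet_iff]

theorem isgn_of_nonneg {x : ℤ} (hx : 0 ≤ x) : isgn x = 1 := by
  simp [isgn, hx.not_gt]

theorem isgn_of_neg {x : ℤ} (hx : x < 0) : isgn x = -1 := by
  simp [isgn, hx]

theorem isgn_mul {a x : ℤ} (ha : a = 1 ∨ a = -1) (hx : x ≠ 0) : isgn (a * x) = a * isgn x := by
  unfold isgn
  rcases ha with rfl | rfl <;> split_ifs <;> omega

def HasEdgeTypeOn (G : SimpleGraph V) (σ : V → V → ℤ) (φ : V → ℤ) (S : Set V) (i j : ℕ)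
    (s : ℤ) : Prop :=
  ∃ u ∈ S, ∃ v ∈ S, G.Adj u v ∧ (φ u).natAbs = i ∧ (φ v).natAbs = j ∧ redSign σ φ u v = s

def ProperOn (G : SimpleGraph V) (σ : V → V → ℤ) (S : Set V) (φ : V → ℤ) : Prop :=
  ∀ u ∈ S, ∀ v ∈ S, G.Adj u v → φ u ≠ σ u v * φ v

structure IsCompleteOn (G : SimpleGraph V) (σ : V → V → ℤ) (k : ℕ) (S : Set V) (φ : V → ℤ) :
    Prop where
  mem_colourSet : ∀ v ∈ S, φ v ∈ colourSet k
  properOn : ProperOn G σ S φ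
  pair : ∀ i j : ℕ, (i : ℤ) ∈ colourSet k → (j : ℤ) ∈ colourSet k → i ≠ j →
    HasEdgeTypeOn G σ φ S i j 1 ∧ HasEdgeTypeOn G σ φ S i j (-1)
  loop : ∀ i : ℕ, 1 ≤ i → (i : ℤ) ∈ colourSet k → HasEdgeTypeOn G σ φ S i i (-1)

theorem hasEdgeTypeOn_univ {i j : ℕ} {s : ℤ} :
    HasEdgeTypeOn G σ φ Set.univ i j s ↔ HasEdgeType G σ φ i j s := by
  simp [HasEdgeTypeOn, HasEdgeType]

theorem isCompleteOn_univ : IsCompleteOn G σ k Set.univ φ ↔ IsCompleteColouring G σ k φ := by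
  simp only [IsCompleteColouring, IsProperColouring, ← hasEdgeTypeOn_univ]
  exact ⟨fun ⟨h₁, h₂, h₃, h₄⟩ =>
      ⟨⟨fun v => h₁ v trivial, fun u v => h₂ u trivial v trivial⟩, h₃, h₄⟩,
    fun ⟨⟨h₁, h₂⟩, h₃, h₄⟩ => ⟨fun v _ => h₁ v, fun u _ v _ => h₂ u v, h₃, h₄⟩⟩

theorem hasEdgeType_induce_iff {i j : ℕ} {s : ℤ} :
    HasEdgeType (G.induce S) (fun a b => σ a b) (fun a => φ a) i j s ↔
      HasEdgeTypeOn G σ φ S i j s := by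
  simp only [HasEdgeType, HasEdgeTypeOn, Subtype.exists, comap_adj, redSign,
    Function.Embedding.coe_subtype, exists_prop]

theorem isCompleteOn_iff_induce :
    IsCompleteOn G σ k S φ ↔
      IsCompleteColouring (G.induce S) (fun a b => σ a b) k (fun a => φ a) := by
  simp only [IsCompleteColouring, IsProperColouring, hasEdgeType_induce_iff]
  exact ⟨fun ⟨h₁, h₂, h₃, h₄⟩ =>
      ⟨⟨fun v => h₁ v v.2, fun u v => h₂ u u.2 v v.2⟩, h₃, h₄⟩,
    fun ⟨⟨h₁, h₂⟩, h₃, h₄⟩ => ⟨fun v hv => h₁ ⟨v, hv⟩, fun u hu v hv => h₂ ⟨u, hu⟩ ⟨v, hv⟩, h₃, h₄⟩⟩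

theorem HasEdgeTypeOn.mono {i j : ℕ} {s : ℤ} (hS : S ⊆ S')
    (hφ : ∀ x ∈ S, (φ x).natAbs = i ∨ (φ x).natAbs = j → φ' x = φ x)
    (h : HasEdgeTypeOn G σ φ S i j s) : HasEdgeTypeOn G σ φ' S' i j s := by
  obtain ⟨u, hu, v, hv, hadj, rfl, rfl, rfl⟩ := h
  have hu' := hφ u hu (.inl rfl)
  have hv' := hφ v hv (.inr rfl)
  exact ⟨u, hS hu, v, hS hv, hadj, by rw [hu'], by rw [hv'], by simp only [redSign, hu', hv']⟩

theorem HasEdgeTypeOn.symm (hσ : IsSignature σ) {i j : ℕ} {s : ℤ}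
    (h : HasEdgeTypeOn G σ φ S i j s) : HasEdgeTypeOn G σ φ S j i s := by
  obtain ⟨u, hu, v, hv, hadj, hi, hj, rfl⟩ := h
  exact ⟨v, hv, u, hu, hadj.symm, hj, hi, by simp only [redSign, hσ.1 u v]; ring⟩

theorem hasEdgeTypeOn_of_adj (hσ : IsSignature σ) (hu : u ∈ S) (hv : v ∈ S) (hadj : G.Adj u v)
    (hφu : 0 ≤ φ u) {c : ℤ} (hc : σ u v * φ v = c) (hc0 : c ≠ 0) :
    HasEdgeTypeOn G σ φ S (φ u).natAbs c.natAbs (isgn c) := by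
  have hφv : φ v ≠ 0 := by rintro h; simp [h] at hc; exact hc0 hc.symm
  refine ⟨u, hu, v, hv, hadj, rfl, ?_, ?_⟩
  · rw [← hc, Int.natAbs_mul]; rcases hσ.2 u v with h | h <;> simp [h]
  · rw [← hc, redSign, isgn_of_nonneg hφu, isgn_mul (hσ.2 u v) hφv]; ring

theorem ProperOn.insert_of_forall_adj (hσ : IsSignature σ) (h : ProperOn G σ S φ)
    (hv : ∀ u ∈ S, G.Adj v u → φ v ≠ σ v u * φ u) : ProperOn G σ (insert v S) φ := by
  have hvu : ∀ u ∈ S, G.Adj u v → φ u ≠ σ u v * φ v := fun u hu hadj he => by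
    apply hv u hu hadj.symm
    rw [he, hσ.1 u v, ← mul_assoc]
    rcases hσ.2 v u with h | h <;> simp [h]
  rintro u (rfl | hu) w (rfl | hw) hadj
  · exact (G.irrefl hadj).elim
  · exact hv w hw hadj
  · exact hvu u hu hadj
  · exact h u hu w hw hadj

theorem IsSignature.mul_swap_self (hσ : IsSignature σ) (u v : V) : σ u v * σ v u = 1 := by
  rw [hσ.1 v u]; rcases hσ.2 u v with h | h <;> simp [h]

theorem ne_sign_mul_of_natAbs_ne {a x y : ℤ} (ha : a = 1 ∨ a = -1) (h : x.natAbs ≠ y.natAbs) :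
    x ≠ a * y := by
  rintro rfl; rcases ha with rfl | rfl <;> simp at h

theorem hasEdgeTypeOn_of_sees (hσ : IsSignature σ) (hv : v ∈ S) (hφv : 0 ≤ φ v) {j : ℕ}
    (hj : 1 ≤ j) (hsees : ∀ c : ℤ, c.natAbs = j → ∃ u ∈ S, G.Adj v u ∧ σ v u * φ u = c) :
    HasEdgeTypeOn G σ φ S (φ v).natAbs j 1 ∧ HasEdgeTypeOn G σ φ S (φ v).natAbs j (-1) := by
  obtain ⟨u, hu, hadj, hc⟩ := hsees j (Int.natAbs_natCast j)
  obtain ⟨u', hu', hadj', hc'⟩ := hsees (-j) (by simp)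
  have h₁ := hasEdgeTypeOn_of_adj hσ hv hu hadj hφv hc (by omega)
  have h₂ := hasEdgeTypeOn_of_adj hσ hv hu' hadj' hφv hc' (by omega)
  rw [Int.natAbs_natCast, isgn_of_nonneg (by omega)] at h₁
  rw [Int.natAbs_neg, Int.natAbs_natCast, isgn_of_neg (by omega)] at h₂
  exact ⟨h₁, h₂⟩

theorem ProperOn.update [DecidableEq V] (hσ : IsSignature σ) (h : ProperOn G σ S φ) (hv : v ∉ S)
    {c : ℤ} (hc : ∀ u ∈ S, G.Adj v u → c ≠ σ v u * φ u) :
    ProperOn G σ (insert v S) (Function.update φ v c) := by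
  have heq : ∀ x ∈ S, Function.update φ v c x = φ x := fun x hx =>
    Function.update_of_ne (ne_of_mem_of_not_mem hx hv) _ _
  refine ProperOn.insert_of_forall_adj hσ (fun u hu w hw hadj => ?_) fun u hu hadj => ?_
  · rw [heq u hu, heq w hw]; exact h u hu w hw hadj
  · rw [Function.update_self, heq u hu]; exact hc u hu hadj

/-- The colour class `0` is independent, so it can share the new absolute value `N` of `v`;
the sign `-σ x v` keeps each of its vertices `x` compatible with `v`. -/
def recolourZeroClass [DecidableEq V] (σ : V → V → ℤ) (φ : V → ℤ) (v : V) (N : ℕ) : V → ℤ :=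
  Function.update (fun x => if φ x = 0 then -σ x v * N else φ x) v N

section recolourZeroClass

variable [DecidableEq V] {N : ℕ}

theorem recolourZeroClass_self : recolourZeroClass σ φ v N v = N :=
  Function.update_self ..

theorem recolourZeroClass_of_ne_zero {x : V} (hx : x ≠ v) (h0 : φ x ≠ 0) :
    recolourZeroClass σ φ v N x = φ x := by
  simp [recolourZeroClass, hx, h0]

theorem sign_mul_recolourZeroClass_of_eq_zero (hσ : IsSignature σ) {x : V} (hx : x ≠ v)
    (h0 : φ x = 0) : σ v x * recolourZeroClass σ φ v N x = -N := by
  rw [recolourZeroClass, Function.update_of_ne hx, if_pos h0, neg_mul, mul_neg, ← mul_assoc,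
    hσ.mul_swap_self, one_mul]

theorem natAbs_recolourZeroClass_of_eq_zero (hσ : IsSignature σ) {x : V} (hx : x ≠ v)
    (h0 : φ x = 0) : (recolourZeroClass σ φ v N x).natAbs = N := by
  have := congrArg Int.natAbs (sign_mul_recolourZeroClass_of_eq_zero (N := N) hσ hx h0)
  rwa [Int.natAbs_mul, Int.natAbs_neg, Int.natAbs_natCast,
    show (σ v x).natAbs = 1 by rcases hσ.2 v x with e | e <;> simp [e], one_mul] at this

theorem ProperOn.recolourZeroClass (hσ : IsSignature σ) (h : ProperOn G σ S φ) (hv : v ∉ S)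
    (hN : 0 < N) (hold : ∀ x ∈ S, (φ x).natAbs < N) :
    ProperOn G σ (insert v S) (recolourZeroClass σ φ v N) := by
  have hne : ∀ x ∈ S, x ≠ v := fun x hx => ne_of_mem_of_not_mem hx hv
  refine ProperOn.insert_of_forall_adj hσ (fun u hu w hw hadj => ?_) fun u hu _ => ?_
  · have hold' := h u hu w hw hadj
    by_cases hu0 : φ u = 0 <;> by_cases hw0 : φ w = 0
    · simp [hu0, hw0] at hold'
    · refine ne_sign_mul_of_natAbs_ne (hσ.2 u w) ?_
      rw [natAbs_recolourZeroClass_of_eq_zero hσ (hne u hu) hu0,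
        recolourZeroClass_of_ne_zero (hne w hw) hw0]
      exact (hold w hw).ne'
    · refine ne_sign_mul_of_natAbs_ne (hσ.2 u w) ?_
      rw [natAbs_recolourZeroClass_of_eq_zero hσ (hne w hw) hw0,
        recolourZeroClass_of_ne_zero (hne u hu) hu0]
      exact (hold u hu).ne
    · rw [recolourZeroClass_of_ne_zero (hne u hu) hu0, recolourZeroClass_of_ne_zero (hne w hw) hw0]
      exact hold'
  · rw [recolourZeroClass_self]
    by_cases hu0 : φ u = 0
    · rw [sign_mul_recolourZeroClass_of_eq_zero hσ (hne u hu) hu0]; omega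
    · refine ne_sign_mul_of_natAbs_ne (hσ.2 v u) ?_
      rw [recolourZeroClass_of_ne_zero (hne u hu) hu0, Int.natAbs_natCast]
      exact (hold u hu).ne'

theorem hasEdgeTypeOn_recolourZeroClass_of_sees (hσ : IsSignature σ) (hv : v ∉ S) {j : ℕ} (hj : 1 ≤ j) (hsees : ∀ c : ℤ, c.natAbs = j → ∃ u ∈ S, G.Adj v u ∧ σ v u * φ u = c) :
    HasEdgeTypeOn G σ (recolourZeroClass σ φ v N) (insert v S) N j 1 ∧
      HasEdgeTypeOn G σ (recolourZeroClass σ φ v N) (insert v S) N j (-1) := by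
  simpa only [recolourZeroClass_self, Int.natAbs_natCast] using
    hasEdgeTypeOn_of_sees (φ := recolourZeroClass σ φ v N) hσ (Set.mem_insert v S)
      (by rw [recolourZeroClass_self]; positivity) hj fun c hc => by
        obtain ⟨u, hu, hadj, hu'⟩ := hsees c hc
        have hu0 : φ u ≠ 0 := by rintro h0; rw [h0, mul_zero] at hu'; omega
        exact ⟨u, Set.mem_insert_of_mem v hu, hadj,
          by rw [recolourZeroClass_of_ne_zero (ne_of_mem_of_not_mem hu hv) hu0, hu']⟩

theorem hasEdgeTypeOn_recolourZeroClass_of_adj (hσ : IsSignature σ) (hv : v ∉ S) (hN : 0 < N)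
    (hu : u ∈ S) (hadj : G.Adj v u) (hu0 : φ u = 0) :
    HasEdgeTypeOn G σ (recolourZeroClass σ φ v N) (insert v S) N N (-1) := by
  have hN' : (0 : ℤ) < N := Int.natCast_pos.2 hN
  simpa only [recolourZeroClass_self, Int.natAbs_neg, Int.natAbs_natCast,
    isgn_of_neg (neg_neg_of_pos hN')] using
    hasEdgeTypeOn_of_adj hσ (Set.mem_insert v S) (Set.mem_insert_of_mem v hu) hadj
      (by rw [recolourZeroClass_self]; exact hN'.le)
      (sign_mul_recolourZeroClass_of_eq_zero hσ (ne_of_mem_of_not_mem hu hv) hu0)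
      (neg_ne_zero.2 hN'.ne')

end recolourZeroClass

section insert

variable [DecidableEq V] (hσ : IsSignature σ) (h : IsCompleteOn G σ k S φ) (hv : v ∉ S)
include hσ h hv

theorem IsCompleteOn.insert_of_free {c : ℤ} (hc : c ∈ colourSet k)
    (hfree : ∀ u ∈ S, G.Adj v u → σ v u * φ u ≠ c) :
    IsCompleteOn G σ k (insert v S) (Function.update φ v c) := by
  have heq : ∀ x ∈ S, Function.update φ v c x = φ x := fun x hx =>
    Function.update_of_ne (ne_of_mem_of_not_mem hx hv) _ _
  have hmono {i j : ℕ} {s : ℤ} := HasEdgeTypeOn.mono (G := G) (σ := σ) (i := i) (j := j) (s := s)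
    (Set.subset_insert v S) fun x hx _ => heq x hx
  refine ⟨?_, h.properOn.update hσ hv fun u hu hadj => (hfree u hu hadj).symm,
    fun i j hi hj hij => (h.pair i j hi hj hij).imp hmono hmono,
    fun i hi hik => hmono (h.loop i hi hik)⟩
  rintro x (rfl | hx)
  · simpa using hc
  · rw [heq x hx]; exact h.mem_colourSet x hx

theorem IsCompleteOn.insert_zero (hk : Even k)
    (hblocked : ∀ c ∈ colourSet k, ∃ u ∈ S, G.Adj v u ∧ σ v u * φ u = c) :
    IsCompleteOn G σ (k + 1) (insert v S) (Function.update φ v 0) := by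
  rw [Nat.even_iff] at hk
  have heq : ∀ x ∈ S, Function.update φ v 0 x = φ x := fun x hx =>
    Function.update_of_ne (ne_of_mem_of_not_mem hx hv) _ _
  have hmono {i j : ℕ} {s : ℤ} := HasEdgeTypeOn.mono (G := G) (σ := σ) (i := i) (j := j) (s := s)
    (Set.subset_insert v S) fun x hx _ => heq x hx
  have hne : ∀ x ∈ S, φ x ≠ 0 := fun x hx => by
    have := mem_colourSet_iff.1 (h.mem_colourSet x hx); omega
  have hzero : ∀ j : ℕ, 1 ≤ j → j ≤ k / 2 →
      HasEdgeTypeOn G σ (Function.update φ v 0) (insert v S) 0 j 1 ∧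
        HasEdgeTypeOn G σ (Function.update φ v 0) (insert v S) 0 j (-1) := by
    intro j hj hjk
    simpa using hasEdgeTypeOn_of_sees (φ := Function.update φ v 0) hσ (Set.mem_insert v S)
      (by simp) hj fun c hc => by
      obtain ⟨u, hu, hadj, hu'⟩ := hblocked c (mem_colourSet_iff.2 (by omega))
      exact ⟨u, Set.mem_insert_of_mem v hu, hadj, by rw [heq u hu, hu']⟩
  refine ⟨?_, h.properOn.update hσ hv fun u hu _ => ?_, fun i j hi hj hij => ?_, fun i hi hik => ?_⟩
  · rintro x (rfl | hx)
    · simp only [Function.update_self, mem_colourSet_iff, Int.natAbs_zero]; omega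
    · have := mem_colourSet_iff.1 (h.mem_colourSet x hx)
      rw [heq x hx, mem_colourSet_iff]; omega
  · exact (mul_ne_zero (by rcases hσ.2 v u with h | h <;> simp [h]) (hne u hu)).symm
  · rw [natCast_mem_colourSet_iff] at hi hj
    rcases Nat.eq_zero_or_pos i with rfl | hi0
    · exact hzero j (by omega) (by omega)
    rcases Nat.eq_zero_or_pos j with rfl | hj0
    · exact (hzero i hi0 (by omega)).imp (·.symm hσ) (·.symm hσ)
    exact (h.pair i j (natCast_mem_colourSet_iff.2 (by omega))
      (natCast_mem_colourSet_iff.2 (by omega)) hij).imp hmono hmono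
  · rw [natCast_mem_colourSet_iff] at hik
    exact hmono (h.loop i hi (natCast_mem_colourSet_iff.2 (by omega)))

theorem IsCompleteOn.insert_top (hk : Odd k)
    (hblocked : ∀ c ∈ colourSet k, ∃ u ∈ S, G.Adj v u ∧ σ v u * φ u = c) :
    IsCompleteOn G σ (k + 1) (insert v S) (recolourZeroClass σ φ v (k / 2 + 1)) := by
  rw [Nat.odd_iff] at hk
  have hold : ∀ x ∈ S, (φ x).natAbs ≤ k / 2 := fun x hx =>
    (mem_colourSet_iff.1 (h.mem_colourSet x hx)).2
  have hkeep : ∀ x ∈ S, φ x ≠ 0 → recolourZeroClass σ φ v (k / 2 + 1) x = φ x := fun x hx =>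
    recolourZeroClass_of_ne_zero (ne_of_mem_of_not_mem hx hv)
  have hmono {i j : ℕ} {s : ℤ} (hi : 1 ≤ i) (hj : 1 ≤ j) :=
    HasEdgeTypeOn.mono (G := G) (σ := σ) (i := i) (j := j) (s := s)
      (φ' := recolourZeroClass σ φ v (k / 2 + 1)) (Set.subset_insert v S)
      fun x hx hij => hkeep x hx (by omega)
  have htop (j : ℕ) (hj : 1 ≤ j) (hjk : j ≤ k / 2) :=
    hasEdgeTypeOn_recolourZeroClass_of_sees (G := G) (N := k / 2 + 1) hσ hv hj
      fun c hc => hblocked c (mem_colourSet_iff.2 (by omega))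
  refine ⟨?_, h.properOn.recolourZeroClass hσ hv (k / 2).succ_pos fun x hx => by
      have := hold x hx; omega, fun i j hi hj hij => ?_, fun i hi hik => ?_⟩
  · rintro x (rfl | hx)
    · rw [recolourZeroClass_self, mem_colourSet_iff, Int.natAbs_natCast]; omega
    · rw [mem_colourSet_iff]
      by_cases h0 : φ x = 0
      · rw [natAbs_recolourZeroClass_of_eq_zero hσ (ne_of_mem_of_not_mem hx hv) h0]; omega
      · rw [hkeep x hx h0]; have := hold x hx; omega
  · rw [natCast_mem_colourSet_iff] at hi hj
    by_cases hik : i = k / 2 + 1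
    · subst hik; exact htop j (by omega) (by omega)
    by_cases hjk : j = k / 2 + 1
    · subst hjk; exact (htop i (by omega) (by omega)).imp (·.symm hσ) (·.symm hσ)
    exact (h.pair i j (natCast_mem_colourSet_iff.2 (by omega))
      (natCast_mem_colourSet_iff.2 (by omega)) hij).imp (hmono (by omega) (by omega))
      (hmono (by omega) (by omega))
  · rw [natCast_mem_colourSet_iff] at hik
    by_cases hik' : i = k / 2 + 1
    · subst hik'
      obtain ⟨u, hu, hadj, hu'⟩ := hblocked 0 (mem_colourSet_iff.2 (by omega))
      have hu0 : φ u = 0 := by rcases hσ.2 v u with e | e <;> rw [e] at hu' <;> omega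
      exact hasEdgeTypeOn_recolourZeroClass_of_adj hσ hv (k / 2).succ_pos hu hadj hu0
    exact hmono hi hi (h.loop i hi (natCast_mem_colourSet_iff.2 (by omega)))

end insert

theorem IsCompleteOn.exists_insert [DecidableEq V] (hσ : IsSignature σ)
    (h : IsCompleteOn G σ k S φ) (v : V) :
    ∃ k' ≥ k, ∃ φ', IsCompleteOn G σ k' (insert v S) φ' := by
  by_cases hv : v ∈ S
  · exact ⟨k, le_rfl, φ, by rwa [Set.insert_eq_of_mem hv]⟩
  by_cases hfree : ∃ c ∈ colourSet k, ∀ u ∈ S, G.Adj v u → σ v u * φ u ≠ c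
  · obtain ⟨c, hc, hfree⟩ := hfree
    exact ⟨k, le_rfl, _, h.insert_of_free hσ hv hc hfree⟩
  push Not at hfree
  rcases Nat.even_or_odd k with hk | hk
  · exact ⟨k + 1, k.le_succ, _, h.insert_zero hσ hv hk hfree⟩
  · exact ⟨k + 1, k.le_succ, _, h.insert_top hσ hv hk hfree⟩

theorem IsCompleteOn.exists_isCompleteColouring [Finite V] (hσ : IsSignature σ)
    (h : IsCompleteOn G σ k S φ) : ∃ k' ≥ k, ∃ φ', IsCompleteColouring G σ k' φ' := by
  classical
  have := Fintype.ofFinite V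
  suffices ∀ F : Finset V, ∃ k' ≥ k, ∃ φ', IsCompleteOn G σ k' (S ∪ F) φ' by
    obtain ⟨k', hk', φ', h'⟩ := this Finset.univ
    exact ⟨k', hk', φ', isCompleteOn_univ.1 (by simpa using h')⟩
  intro F
  induction F using Finset.cons_induction with
  | empty => exact ⟨k, le_rfl, φ, by simpa using h⟩
  | cons v F _ ih =>
    obtain ⟨k₁, hk₁, φ₁, h₁⟩ := ih
    obtain ⟨k₂, hk₂, φ₂, h₂⟩ := h₁.exists_insert hσ v
    exact ⟨k₂, hk₁.trans hk₂, φ₂, by simpa [Set.union_insert] using h₂⟩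

theorem IsSignature.of_switchEquiv {σ' : V → V → ℤ} (hσ : IsSignature σ)
    (h : SwitchEquiv σ σ') : IsSignature σ' := by
  obtain ⟨s, hs, he⟩ := h
  refine ⟨fun u v => by rw [he, he, hσ.1 u v]; ring, fun u v => ?_⟩
  rw [he]
  rcases hs u with h₁ | h₁ <;> rcases hs v with h₂ | h₂ <;> rcases hσ.2 u v with h₃ | h₃ <;>
    simp [h₁, h₂, h₃]

theorem SwitchEquiv.exists_extend {τ : S → S → ℤ} (h : SwitchEquiv (fun a b : S => σ a b) τ) :
    ∃ σ', SwitchEquiv σ σ' ∧ τ = fun a b : S => σ' a b := by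
  classical
  obtain ⟨s, hs, he⟩ := h
  refine ⟨fun u v => (if hu : u ∈ S then s ⟨u, hu⟩ else 1) * (if hv : v ∈ S then s ⟨v, hv⟩ else 1)
    * σ u v, ⟨fun v => if hv : v ∈ S then s ⟨v, hv⟩ else 1, fun v => ?_, fun _ _ => rfl⟩, ?_⟩
  · dsimp only
    split_ifs
    exacts [hs _, .inl rfl]
  · ext a b; simp [he, a.2, b.2]

theorem IsCompleteOn.admitsComplete_induce {σ' : V → V → ℤ} (hσ' : IsSignature σ')
    (hsw : SwitchEquiv σ σ') (h : IsCompleteOn G σ' k S φ) :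
    AdmitsComplete (G.induce S) (fun a b => σ a b) k :=
  let ⟨s, hs, he⟩ := hsw
  ⟨fun a b => σ' a b, ⟨fun a b => hσ'.1 a b, fun a b => hσ'.2 a b⟩,
    ⟨fun a => s a, fun a => hs a, fun a b => he a b⟩, fun a => φ a, isCompleteOn_iff_induce.1 h⟩

theorem AdmitsComplete.exists_le_of_induce [Finite V] (hσ : IsSignature σ) {m : ℕ}
    (h : AdmitsComplete (G.induce S) (fun a b => σ a b) m) : ∃ m' ≥ m, AdmitsComplete G σ m' := by
  classical
  obtain ⟨τ, -, hτ, ψ, hψ⟩ := h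
  obtain ⟨σ', hsw, rfl⟩ := hτ.exists_extend
  have hσ' := hσ.of_switchEquiv hsw
  have hφ : IsCompleteOn G σ' m S fun v => if hv : v ∈ S then ψ ⟨v, hv⟩ else 0 :=
    isCompleteOn_iff_induce.2 (by convert hψ using 1; ext a; simp [a.2])
  obtain ⟨m', hm', φ', h'⟩ := hφ.exists_isCompleteColouring hσ'
  exact ⟨m', hm', σ', hσ', hsw, φ', h'⟩

theorem exists_finset_witness_pairs {ι α : Type*} (I : Finset ι) (P : ι → α → α → Prop) :
    ∃ F : Finset α, F.card ≤ 2 * I.card ∧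
      ∀ t ∈ I, (∃ u v, P t u v) → ∃ u ∈ F, ∃ v ∈ F, P t u v := by
  classical
  induction I using Finset.cons_induction with
  | empty => exact ⟨∅, by simp, by simp⟩
  | cons t I ht ih =>
    obtain ⟨F, hF, hwit⟩ := ih
    have hmono (F' : Finset α) (hF' : F ⊆ F') (t' : ι) (ht' : t' ∈ I) (h : ∃ u v, P t' u v) :
        ∃ u ∈ F', ∃ v ∈ F', P t' u v :=
      let ⟨u, hu, v, hv, huv⟩ := hwit t' ht' h
      ⟨u, hF' hu, v, hF' hv, huv⟩
    rw [Finset.card_cons]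
    by_cases hP : ∃ u v, P t u v
    · obtain ⟨u, v, huv⟩ := hP
      refine ⟨insert u (insert v F), ?_, ?_⟩
      · have := Finset.card_insert_le u (insert v F)
        have := Finset.card_insert_le v F
        omega
      · simp only [Finset.mem_cons, forall_eq_or_imp]
        exact ⟨fun _ => ⟨u, by simp, v, by simp, huv⟩,
          hmono _ ((Finset.subset_insert v F).trans (Finset.subset_insert u _))⟩
    · refine ⟨F, by omega, ?_⟩
      simp only [Finset.mem_cons, forall_eq_or_imp]
      exact ⟨fun h => (hP h).elim, hmono F subset_rfl⟩

theorem IsCompleteColouring.exists_isCompleteOn_ncard_le (h : IsCompleteColouring G σ k φ) :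
    ∃ S : Set V, IsCompleteOn G σ k S φ ∧ S.ncard ≤ (k + 1) ^ 2 := by
  obtain ⟨⟨hcol, hprop⟩, hpair, hloop⟩ := h
  set T := Finset.Icc (1 - k % 2) (k / 2)
  obtain ⟨F, hF, hwit⟩ := exists_finset_witness_pairs (T ×ˢ T ×ˢ ({1, -1} : Finset ℤ))
    fun t u v => G.Adj u v ∧ (φ u).natAbs = t.1 ∧ (φ v).natAbs = t.2.1 ∧ redSign σ φ u v = t.2.2
  have hF' {i j : ℕ} {s : ℤ} (hi : (i : ℤ) ∈ colourSet k) (hj : (j : ℤ) ∈ colourSet k)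
      (hs : s = 1 ∨ s = -1) (h : HasEdgeType G σ φ i j s) : HasEdgeTypeOn G σ φ F i j s := by
    rw [natCast_mem_colourSet_iff] at hi hj
    exact hwit (i, j, s) (by simp [T, hi, hj, hs]) h
  refine ⟨F, ⟨fun v _ => hcol v, fun u _ v _ => hprop u v, fun i j hi hj hij => ?_,
    fun i hi hik => hF' hik hik (.inr rfl) (hloop i hi hik)⟩, ?_⟩
  · exact ⟨hF' hi hj (.inl rfl) (hpair i j hi hj hij).1,
      hF' hi hj (.inr rfl) (hpair i j hi hj hij).2⟩
  · have hT : 2 * T.card ≤ k + 1 := by simp only [T, Nat.card_Icc]; omega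
    rw [Set.ncard_coe_finset]
    calc F.card ≤ 2 * (T.card * (T.card * 2)) := by simpa using hF
      _ = (2 * T.card) ^ 2 := by ring
      _ ≤ (k + 1) ^ 2 := Nat.pow_le_pow_left hT 2

theorem AdmitsComplete.le_two_mul_card_add_one [Fintype V] {m : ℕ} (h : AdmitsComplete G σ m) :
    m ≤ 2 * Fintype.card V + 1 := by
  obtain ⟨σ', -, -, φ, -, -, hloop⟩ := h
  have hsub : Finset.Icc 1 (m / 2) ⊆ Finset.univ.image fun v => (φ v).natAbs := fun i hi => by
    rw [Finset.mem_Icc] at hi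
    obtain ⟨u, -, -, hu, -⟩ := hloop i hi.1 (natCast_mem_colourSet_iff.2 (by omega))
    exact Finset.mem_image.2 ⟨u, Finset.mem_univ u, hu⟩
  have := (Finset.card_le_card hsub).trans Finset.card_image_le
  simp only [Nat.card_Icc, Finset.card_univ] at this
  omega

theorem bddAbove_setOf_admitsComplete [Finite V] : BddAbove {m | AdmitsComplete G σ m} := by
  have := Fintype.ofFinite V
  exact ⟨_, fun _ hm => AdmitsComplete.le_two_mul_card_add_one hm⟩

theorem le_psi [Finite V] {m : ℕ} (h : AdmitsComplete G σ m) : m ≤ psi G σ :=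
  le_csSup bddAbove_setOf_admitsComplete h

theorem admitsComplete_psi [Finite V] (h : psi G σ ≠ 0) : AdmitsComplete G σ (psi G σ) :=
  Nat.sSup_mem (Set.nonempty_iff_ne_empty.2 fun he => h (by simp [psi, he]))
    bddAbove_setOf_admitsComplete

end

/-- For every `k ≥ 1`, every signed graph with `ψ(G,σ) = k` has an induced
signed subgraph with achromatic number `k` on at most `(k+1)²` vertices. -/
theorem statement15 (k : ℕ) (hk : 1 ≤ k) {V : Type*} [Fintype V]
    (G : SimpleGraph V) (σ : V → V → ℤ) (hσ : IsSignature σ) (hpsi : psi G σ = k) :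
    ∃ s : Set V, psi (G.induce s) (fun a b => σ a.1 b.1) = k ∧
      s.ncard ≤ (k + 1) ^ 2 := by
  obtain ⟨σ', hσ', hsw, φ, hφ⟩ : AdmitsComplete G σ k := hpsi ▸ admitsComplete_psi (by omega)
  obtain ⟨S, hS, hcard⟩ := hφ.exists_isCompleteOn_ncard_le
  refine ⟨S, IsGreatest.csSup_eq ⟨hS.admitsComplete_induce hσ' hsw, fun m hm => ?_⟩, hcard⟩
  obtain ⟨m', hmm', hm'⟩ := hm.exists_le_of_induce hσ
  exact hmm'.trans (hpsi ▸ le_psi hm')
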